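/- Let K ∈ ℝ and let θ : ℝ → ℝ be the constant function θ ≡ K. Then for every x ∈ ℝ and every integer n ≥ 1, the determinant of the n×n Hankel matrix with (i,j) entry 𝒮_{i+j−1}^θ(x)/(i+j−1)! equals 2^{n(n−1)}·K^{n(n−1)/2}·∏_{k=1}^{n} (n−k)!/(2n−k)!. (Note n(n−1) is even, so n(n−1)/2 is a nonnegative integer.) -/

import Mathlib

noncomputable section

/-- `g_R(t) = -(R/π)·log(1 - (π/R)·t)`. -/
def gR (R t : ℝ) : ℝ := -(R / Real.pi) * Real.log (1 - (Real.pi / R) * t)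

/-- `f` is a (smooth) solution of `f'' + θ·f = 0`. -/
def IsSolution (θ f : ℝ → ℝ) : Prop :=
  ContDiff ℝ (⊤ : ℕ∞) f ∧ ∀ t, deriv (deriv f) t + θ t * f t = 0

/-- `f₁, f₂` is the fundamental pair of solutions of `f'' + θ·f = 0` at `x`:
`f₁(x) = f₂'(x) = 1`, `f₂(x) = f₁'(x) = 0`. -/
def IsFundPair (θ : ℝ → ℝ) (x : ℝ) (f₁ f₂ : ℝ → ℝ) : Prop :=
  IsSolution θ f₁ ∧ IsSolution θ f₂ ∧
  f₁ x = 1 ∧ deriv f₁ x = 0 ∧ f₂ x = 0 ∧ deriv f₂ x = 1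

/-- The `n`-th `g_R`-Schwarzian `𝒮_n^{θ,g_R}(x)`, computed from the fundamental pair
`f₁, f₂` at `x`: the `n`-th derivative at `t = 0` of `t ↦ h_x(x + g_R(t))`,
where `h_x = f₂/f₁`. -/
def SchR (R x : ℝ) (f₁ f₂ : ℝ → ℝ) (n : ℕ) : ℝ :=
  iteratedDeriv n (fun t => f₂ (x + gR R t) / f₁ (x + gR R t)) 0

/-- The determinant `𝒟_n^{θ,g_R}(x)` of the `n×n` Hankel matrix with `(i,j)` entry
`𝒮_{i+j-1}^{θ,g_R}(x)/(i+j-1)!`. -/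
def DetR (R x : ℝ) (f₁ f₂ : ℝ → ℝ) (n : ℕ) : ℝ :=
  (Matrix.of fun i j : Fin n =>
    SchR R x f₁ f₂ (i.1 + j.1 + 1) / (Nat.factorial (i.1 + j.1 + 1) : ℝ)).det

/-- Hypothesis (H_R): `f₁, f₂` are linearly independent solutions of `f'' + θ·f = 0`
(constant Wronskian `W = f₁f₂' - f₁'f₂ ≠ 0`) and `h = f₂/f₁` admits a meromorphic
extension `H` to the strip `{|Im z| < R}` (holomorphic off the real zeros of `f₁`,
with poles at those zeros) which satisfies `W·Im H(z)·Im z > 0` for `0 < Im z < R`. -/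
def HypR (θ : ℝ → ℝ) (R : ℝ) : Prop :=
  ∃ (f₁ f₂ : ℝ → ℝ) (H : ℂ → ℂ),
    IsSolution θ f₁ ∧ IsSolution θ f₂ ∧
    f₁ 0 * deriv f₂ 0 - deriv f₁ 0 * f₂ 0 ≠ 0 ∧
    (∀ t : ℝ, f₁ t ≠ 0 → H t = ((f₂ t / f₁ t : ℝ) : ℂ)) ∧
    DifferentiableOn ℂ H
      {z : ℂ | |z.im| < R ∧ ∀ t : ℝ, f₁ t = 0 → z ≠ (t : ℂ)} ∧
    (∀ t : ℝ, f₁ t = 0 →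
      Filter.Tendsto (fun z => ‖H z‖) (nhdsWithin (t : ℂ) {(t : ℂ)}ᶜ) Filter.atTop) ∧
    (∀ z : ℂ, 0 < z.im → z.im < R →
      0 < (f₁ 0 * deriv f₂ 0 - deriv f₁ 0 * f₂ 0) * (H z).im * z.im)

/-- `(i,j)` entry (1-based, clamped to ℕ) of the matrix `T(f,n)(t)`:
`f^{(j-i)}(t)/(j-i)!` if `i ≤ j`, and `0` otherwise. -/
def Tentry (f : ℝ → ℝ) (t : ℝ) (i j : ℕ) : ℝ :=
  if i ≤ j then iteratedDeriv (j - i) f t / (Nat.factorial (j - i) : ℝ) else 0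

end

/-
Since `θ ≡ K`, both `f₂'` and `f₁` solve the equation with the same initial data at `x`, and two
such solutions agree because their Wronskians against the fundamental pair are constant; hence
`f₂' = f₁`, `f₁' = -K f₂`, and `h = f₂ / f₁` solves the Riccati equation `h' = 1 + K h²`,
`h(x) = 0`. Its Taylor series `F` at `x` is therefore Lambert's continued fraction
`F = X / (1 - (K / 1·3) X² / (1 - (K / 3·5) X² / ⋯))`. Truncating after `k` steps gives a Möbius
transformation with a polynomial matrix of degree `≤ k` whose determinant is
`∏_{j<k} (2j+1)(2j+3) · K^k X^{2k}`; this forces `δ_k F` (with `δ_k` its bottom right entry) to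
agree with a polynomial of degree `≤ k` up to order `X^{2k+1}`, with coefficient `K^k` there.
So `δ_k` is an orthogonal polynomial for the Hankel moments: the coefficients of
`δ_0, …, δ_{n-1}` form a lower triangular matrix `L` with `L · H` upper triangular, and comparing
diagonals gives `det H`.
-/

open PowerSeries Topology
open scoped ContDiff

noncomputable section

namespace PowerSeries

variable {R : Type*} [CommRing R]

def shiftX (k : ℕ) (φ : R⟦X⟧) : R⟦X⟧ := mk fun n => coeff (n + k) φ

lemma X_pow_mul_shiftX {k : ℕ} {φ : R⟦X⟧} (h : ∀ m < k, coeff m φ = 0) :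
    X ^ k * shiftX k φ = φ := by
  ext n
  rw [coeff_X_pow_mul']
  split_ifs with hkn
  · simp [shiftX, Nat.sub_add_cancel hkn]
  · exact (h n (by omega)).symm

lemma coeff_add_mul_eq_sum {δ F : R⟦X⟧} {l : ℕ} (hδ : ∀ m, l < m → coeff m δ = 0) (t : ℕ) :
    coeff (l + t) (δ * F) = ∑ u ∈ Finset.range (l + 1), coeff (l - u) δ * coeff (u + t) F := by
  have hsub : ∑ p ∈ Finset.range (l + 1), coeff p δ * coeff (l + t - p) F =
      ∑ p ∈ Finset.range (l + t + 1), coeff p δ * coeff (l + t - p) F :=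
    Finset.sum_subset (Finset.range_subset_range.mpr (by omega)) fun p hp hpl => by
      rw [hδ p (by simp only [Finset.mem_range] at hp hpl; omega), zero_mul]
  rw [coeff_mul, Finset.Nat.sum_antidiagonal_eq_sum_range_succ (fun p q => coeff p δ * coeff q F),
    ← hsub, ← Finset.sum_range_reflect]
  refine Finset.sum_congr rfl fun u hu => ?_
  rw [Finset.mem_range] at hu
  rw [show l + 1 - 1 - u = l - u by omega, show l + t - (l - u) = u + t by omega]

end PowerSeries

lemma Matrix.prod_diag_mul_det_of_isUpperTriangular_mul {n R : Type*} [Fintype n] [DecidableEq n]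
    [LinearOrder n] [CommRing R] {L A : Matrix n n R} (hL : L.IsLowerTriangular)
    (hLA : (L * A).IsUpperTriangular) : (∏ i, L i i) * A.det = ∏ i, (L * A) i i := by
  rw [← Matrix.det_of_isLowerTriangular L hL, ← Matrix.det_mul, Matrix.det_of_isUpperTriangular hLA]

section SecondOrderODE

variable {θ f g f₁ f₂ : ℝ → ℝ} {x K : ℝ}

lemma IsSolution.hasDerivAt (hf : IsSolution θ f) (t : ℝ) : HasDerivAt f (deriv f t) t :=
  (hf.1.differentiable (by simp) t).hasDerivAt

lemma IsSolution.hasDerivAt_deriv (hf : IsSolution θ f) (t : ℝ) :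
    HasDerivAt (deriv f) (-(θ t * f t)) t := by
  rw [← eq_neg_of_add_eq_zero_left (hf.2 t)]
  exact ((contDiff_infty_iff_deriv.mp hf.1).2.differentiable (by simp) t).hasDerivAt

lemma IsSolution.wronskian_eq (hf : IsSolution θ f) (hg : IsSolution θ g) (s t : ℝ) :
    f s * deriv g s - deriv f s * g s = f t * deriv g t - deriv f t * g t := by
  have hW (r : ℝ) : HasDerivAt (fun t => f t * deriv g t - deriv f t * g t) 0 r :=
    (((hf.hasDerivAt r).mul (hg.hasDerivAt_deriv r)).sub
      ((hf.hasDerivAt_deriv r).mul (hg.hasDerivAt r))).congr_deriv (by ring)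
  exact is_const_of_deriv_eq_zero (fun r => (hW r).differentiableAt) (fun r => (hW r).deriv) s t

lemma IsFundPair.eq_of_isSolution {u v : ℝ → ℝ} (h : IsFundPair θ x f₁ f₂) (hu : IsSolution θ u)
    (hv : IsSolution θ v) (h₀ : u x = v x) (h₁ : deriv u x = deriv v x) : u = v := by
  obtain ⟨hf₁, hf₂, h1x, h1x', h2x, h2x'⟩ := h
  funext t
  have W₁₂ := hf₁.wronskian_eq hf₂ t x
  have Wu₁ := hu.wronskian_eq hf₁ t x
  have Wu₂ := hu.wronskian_eq hf₂ t x
  have Wv₁ := hv.wronskian_eq hf₁ t x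
  have Wv₂ := hv.wronskian_eq hf₂ t x
  simp only [h1x, h1x', h2x, h2x', h₀, h₁] at W₁₂ Wu₁ Wu₂ Wv₁ Wv₂
  -- `u - v = f₁ W(u - v, f₂) - f₂ W(u - v, f₁)` since `W(f₁, f₂) = 1`
  linear_combination f₁ t * (Wu₂ - Wv₂) - f₂ t * (Wu₁ - Wv₁) - (u t - v t) * W₁₂

lemma isSolution_deriv_of_const (hf : IsSolution (fun _ => K) f) :
    IsSolution (fun _ => K) (deriv f) := by
  have hf'' : deriv (deriv f) = fun t => -(K * f t) :=
    funext fun t => eq_neg_of_add_eq_zero_left (hf.2 t)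
  refine ⟨(contDiff_infty_iff_deriv.mp hf.1).2, fun t => ?_⟩
  simp [hf'']

lemma IsFundPair.deriv_snd (h : IsFundPair (fun _ => K) x f₁ f₂) : deriv f₂ = f₁ := by
  have ⟨hf₁, hf₂, h1x, h1x', h2x, h2x'⟩ := h
  refine h.eq_of_isSolution (isSolution_deriv_of_const hf₂) hf₁ (by rw [h2x', h1x]) ?_
  rw [eq_neg_of_add_eq_zero_left (hf₂.2 x), h2x, h1x']
  ring

lemma IsFundPair.deriv_fst (h : IsFundPair (fun _ => K) x f₁ f₂) :
    deriv f₁ = fun t => -(K * f₂ t) := by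
  rw [← h.deriv_snd]
  exact funext fun t => eq_neg_of_add_eq_zero_left (h.2.1.2 t)

lemma IsFundPair.hasDerivAt_div (h : IsFundPair (fun _ => K) x f₁ f₂) {t : ℝ} (ht : f₁ t ≠ 0) :
    HasDerivAt (fun s => f₂ s / f₁ s) (1 + K * (f₂ t / f₁ t) ^ 2) t := by
  refine ((h.2.1.hasDerivAt t).div (h.1.hasDerivAt t) ht).congr_deriv ?_
  rw [h.deriv_snd, h.deriv_fst]
  field_simp
  ring

end SecondOrderODE

section Taylor

variable {𝕜 : Type*} [NontriviallyNormedField 𝕜] {f g : 𝕜 → 𝕜} {x : 𝕜}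

def taylorSeries (f : 𝕜 → 𝕜) (x : 𝕜) : 𝕜⟦X⟧ := mk fun m => iteratedDeriv m f x / m.factorial

lemma constantCoeff_taylorSeries : constantCoeff (taylorSeries f x) = f x := by
  simp [taylorSeries]

lemma taylorSeries_congr (h : f =ᶠ[𝓝 x] g) : taylorSeries f x = taylorSeries g x := by
  ext m
  simp [taylorSeries, h.iteratedDeriv_eq m]

lemma derivative_taylorSeries [CharZero 𝕜] :
    d⁄dX 𝕜 (taylorSeries f x) = taylorSeries (deriv f) x := by
  ext m
  simp only [taylorSeries, coeff_derivative, coeff_mk, iteratedDeriv_succ', Nat.factorial_succ,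
    Nat.cast_mul, Nat.cast_add, Nat.cast_one]
  field_simp

lemma taylorSeries_const_add (c : 𝕜) :
    taylorSeries (fun t => c + f t) x = C c + taylorSeries f x := by
  ext (_ | m)
  · simp [taylorSeries]
  · simp [taylorSeries, iteratedDeriv_const_add]

lemma taylorSeries_const_mul (c : 𝕜) :
    taylorSeries (fun t => c * f t) x = C c * taylorSeries f x := by
  ext m
  simp [taylorSeries, mul_div_assoc]

lemma taylorSeries_mul [CharZero 𝕜] (hf : ContDiffAt 𝕜 ∞ f x) (hg : ContDiffAt 𝕜 ∞ g x) :
    taylorSeries (fun t => f t * g t) x = taylorSeries f x * taylorSeries g x := by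
  ext m
  rw [coeff_mul, Finset.Nat.sum_antidiagonal_eq_sum_range_succ
    (fun p q => coeff p (taylorSeries f x) * coeff q (taylorSeries g x))]
  simp only [taylorSeries, coeff_mk]
  rw [iteratedDeriv_fun_mul (hf.of_le (by exact_mod_cast le_top))
    (hg.of_le (by exact_mod_cast le_top)), Finset.sum_div]
  refine Finset.sum_congr rfl fun i hi => ?_
  have : (m.factorial : 𝕜) ≠ 0 := by exact_mod_cast m.factorial_ne_zero
  rw [Nat.cast_choose 𝕜 (by simpa [Nat.lt_succ_iff] using hi)]
  field_simp

end Taylor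

section RiccatiTail

variable {𝕜 : Type*} [Field 𝕜] {K a : 𝕜} {φ : 𝕜⟦X⟧}

/-- For `a = 1` this says `φ' = 1 + K φ²`, `φ(0) = 0`; for `a = 2j + 1` it is the equation
satisfied by the `j`-th tail of the continued fraction of that solution. -/
def IsRiccatiTail (K a : 𝕜) (φ : 𝕜⟦X⟧) : Prop :=
  constantCoeff φ = 0 ∧
    C a * (X * d⁄dX 𝕜 φ) = C a ^ 2 * X - C a * (C a - 1) * φ + C K * (X * φ ^ 2)

lemma IsRiccatiTail.coeff_succ (h : IsRiccatiTail K a φ) (n : ℕ) :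
    a * (a + n) * coeff (n + 1) φ = a ^ 2 * (if n = 0 then 1 else 0) + K * coeff n (φ ^ 2) := by
  have := congrArg (coeff (n + 1)) h.2
  simp only [mul_assoc, sub_mul, one_mul, ← map_pow, map_add, map_sub, coeff_C_mul,
    coeff_succ_X_mul, coeff_derivative, coeff_X, Nat.add_eq_right] at this
  split_ifs at this ⊢ <;> linear_combination this

lemma IsRiccatiTail.X_mul_shiftX_one (h : IsRiccatiTail K a φ) : X * shiftX 1 φ = φ := by
  simpa using X_pow_mul_shiftX (k := 1) fun m hm => by
    rw [Nat.lt_one_iff.mp hm, coeff_zero_eq_constantCoeff_apply, h.1]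

lemma IsRiccatiTail.coeff_one (h : IsRiccatiTail K a φ) (ha : a ≠ 0) : coeff 1 φ = 1 := by
  have := h.coeff_succ 0
  simp only [Nat.cast_zero, add_zero, if_pos, coeff_zero_eq_constantCoeff_apply, map_pow,
    h.1] at this
  have : a ^ 2 * (coeff 1 φ - 1) = 0 := by linear_combination this
  simpa [ha, sub_eq_zero] using this

lemma IsRiccatiTail.coeff_two (h : IsRiccatiTail K a φ) (ha : a ≠ 0) (ha₁ : a + 1 ≠ 0) :
    coeff 2 φ = 0 := by
  have hsq : coeff 1 (φ ^ 2) = 0 := by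
    rw [← h.X_mul_shiftX_one, mul_pow, coeff_X_pow_mul']
    simp
  have := h.coeff_succ 1
  rw [hsq] at this
  simp only [Nat.cast_one, one_ne_zero, if_false, mul_zero, zero_add] at this
  simpa [ha, ha₁] using this

lemma IsRiccatiTail.X_add_X_sq_mul_shiftX_two (h : IsRiccatiTail K a φ) (ha : a ≠ 0) :
    X + X ^ 2 * shiftX 2 φ = φ := by
  ext (_ | _ | n)
  · simp [h.1]
  · simp [coeff_X_pow_mul', coeff_X, h.coeff_one ha]
  · simp [coeff_X_pow_mul', coeff_X, shiftX]

lemma IsRiccatiTail.mul_shiftX_one_inv (h : IsRiccatiTail K a φ) (ha : a ≠ 0) :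
    shiftX 1 φ * (shiftX 1 φ)⁻¹ = 1 :=
  PowerSeries.mul_inv_cancel _ (by simp [shiftX, h.coeff_one ha])

/-- The next tail `(a (a + 2) / K) (φ - X) / (X φ)` of the continued fraction. -/
def riccatiNext (K a : 𝕜) (φ : 𝕜⟦X⟧) : 𝕜⟦X⟧ :=
  C (a * (a + 2) / K) * shiftX 2 φ * (shiftX 1 φ)⁻¹

lemma IsRiccatiTail.chain (h : IsRiccatiTail K a φ) (hK : K ≠ 0) (ha : a ≠ 0) :
    C (a * (a + 2)) * φ = C (a * (a + 2)) * X + C K * (X * φ * riccatiNext K a φ) := by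
  have hC : C K * C (a * (a + 2) / K) = C (a * (a + 2)) := by
    rw [← map_mul, mul_div_cancel₀ _ hK]
  unfold riccatiNext
  linear_combination (-(X * φ * shiftX 2 φ * (shiftX 1 φ)⁻¹)) * hC
    + (C (a * (a + 2)) * X * shiftX 2 φ * (shiftX 1 φ)⁻¹) * h.X_mul_shiftX_one
    - (C (a * (a + 2)) * X ^ 2 * shiftX 2 φ) * h.mul_shiftX_one_inv ha
    - C (a * (a + 2)) * h.X_add_X_sq_mul_shiftX_two ha

lemma IsRiccatiTail.next (h : IsRiccatiTail K a φ) (hK : K ≠ 0) (ha : a ≠ 0)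
    (ha₁ : a + 1 ≠ 0) : IsRiccatiTail K (a + 2) (riccatiNext K a φ) := by
  set ψ := riccatiNext K a φ
  refine ⟨by simp [ψ, riccatiNext, shiftX, h.coeff_two ha ha₁], ?_⟩
  have hB := h.chain hK ha
  have hB' := congrArg (d⁄dX 𝕜) hB
  simp only [Derivation.leibniz, smul_eq_mul, derivative_C, derivative_X, map_add, mul_zero,
    add_zero, mul_one] at hB'
  simp only [map_mul, map_add, map_ofNat] at hB hB' ⊢
  -- eliminate `φ'` between the equation for `φ` and the derivative of the chain relation
  have key : C a * C K * X * φ * (((C a + 2) * (X * d⁄dX 𝕜 ψ)) -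
      ((C a + 2) ^ 2 * X - (C a + 2) * (C a + 2 - 1) * ψ + C K * (X * ψ ^ 2))) = 0 := by
    linear_combination (-(C a) * (C a + 2) * X) * hB'
      + (C a * (C a + 2) ^ 2 - (C a + 2) * C K * X * ψ) * h.2
      + (-(C a) * (C a + 2) * (C a - 1) + (C a + 2) * C K * φ * X + C a * C K * X * ψ) * hB
  have hφ : φ ≠ 0 := fun h0 => by simpa [h0] using h.coeff_one ha
  simpa [sub_eq_zero, ha, hK, X_ne_zero, hφ] using key

def riccatiChain (K : 𝕜) (F : 𝕜⟦X⟧) : ℕ → 𝕜⟦X⟧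
  | 0 => F
  | j + 1 => riccatiNext K (2 * j + 1) (riccatiChain K F j)

lemma IsRiccatiTail.isRiccatiTail_riccatiChain [CharZero 𝕜] {F : 𝕜⟦X⟧}
    (hF : IsRiccatiTail K 1 F) (hK : K ≠ 0) (j : ℕ) :
    IsRiccatiTail K (2 * j + 1) (riccatiChain K F j) := by
  induction j with
  | zero => simpa [riccatiChain] using hF
  | succ j ih =>
    have ha : (2 * ((j + 1 : ℕ) : 𝕜) + 1) = 2 * j + 1 + 2 := by push_cast; ring
    rw [ha]
    exact ih.next hK (by norm_cast) (by norm_cast)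

lemma IsRiccatiTail.eq_X [CharZero 𝕜] (hF : IsRiccatiTail 0 1 φ) : φ = X := by
  ext (_ | n)
  · simp [hF.1]
  · have := hF.coeff_succ n
    simp only [one_mul, one_pow, zero_mul, add_zero] at this
    rcases n with _ | n
    · simpa using this
    · rw [coeff_X, if_neg (by omega)]
      rw [if_neg (by omega)] at this
      exact (mul_eq_zero.mp this).resolve_left (by norm_cast)

end RiccatiTail

lemma IsFundPair.isRiccatiTail_taylorSeries {K x : ℝ} {f₁ f₂ : ℝ → ℝ}
    (h : IsFundPair (fun _ => K) x f₁ f₂) :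
    IsRiccatiTail K 1 (taylorSeries (fun t => f₂ t / f₁ t) x) := by
  set H := fun t => f₂ t / f₁ t
  have hx : f₁ x ≠ 0 := by rw [h.2.2.1]; exact one_ne_zero
  have hH : ContDiffAt ℝ ∞ H x := h.2.1.1.contDiffAt.div h.1.1.contDiffAt hx
  have hderiv : deriv H =ᶠ[𝓝 x] fun t => 1 + K * (H t * H t) := by
    filter_upwards [h.1.1.continuous.continuousAt.eventually_ne hx] with t ht
    rw [(h.hasDerivAt_div ht).deriv, sq]
  have hF : d⁄dX ℝ (taylorSeries H x) = C 1 + C K * taylorSeries H x ^ 2 := by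
    rw [derivative_taylorSeries, taylorSeries_congr hderiv, taylorSeries_const_add,
      taylorSeries_const_mul, taylorSeries_mul hH hH, sq]
  refine ⟨by simp [constantCoeff_taylorSeries, H, h.2.2.2.2.1], ?_⟩
  rw [hF]
  simp only [map_one]
  ring

def tailCoeff (j : ℕ) : ℕ := (2 * j + 1) * (2 * j + 3)

def tailCoeffProd (k : ℕ) : ℕ := ∏ j ∈ Finset.range k, tailCoeff j

lemma tailCoeffProd_pos (k : ℕ) : 0 < tailCoeffProd k :=
  Finset.prod_pos fun _ _ => Nat.mul_pos (Nat.succ_pos _) (Nat.succ_pos _)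

lemma tailCoeffProd_succ (k : ℕ) : tailCoeffProd (k + 1) = tailCoeffProd k * tailCoeff k :=
  Finset.prod_range_succ _ _

section ContFrac

variable {𝕜 : Type*} [Field 𝕜] {K : 𝕜} {φ : ℕ → 𝕜⟦X⟧}

/-- `φ j = X / (1 - K X φ (j + 1) / ((2j+1)(2j+3)))`: the tails of Lambert's continued fraction
of `tan`, rescaled by `K`. -/
def IsContFracTails (K : 𝕜) (φ : ℕ → 𝕜⟦X⟧) : Prop :=
  ∀ j, constantCoeff (φ j) = 0 ∧ coeff 1 (φ j) = 1 ∧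
    C (tailCoeff j : 𝕜) * φ j = C (tailCoeff j : 𝕜) * X + C K * (X * φ j * φ (j + 1))

lemma IsRiccatiTail.exists_isContFracTails [CharZero 𝕜] {F : 𝕜⟦X⟧} (hF : IsRiccatiTail K 1 F) :
    ∃ φ, φ 0 = F ∧ IsContFracTails K φ := by
  rcases eq_or_ne K 0 with rfl | hK
  · refine ⟨fun _ => X, (hF.eq_X).symm, fun j => ⟨by simp, by simp, by simp⟩⟩
  · refine ⟨riccatiChain K F, rfl, fun j => ?_⟩
    have h := hF.isRiccatiTail_riccatiChain hK j
    have ha : (2 * j + 1 : 𝕜) ≠ 0 := by norm_cast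
    refine ⟨h.1, h.coeff_one ha, ?_⟩
    have hc : ((tailCoeff j : ℕ) : 𝕜) = (2 * j + 1) * (2 * j + 1 + 2) := by
      push_cast [tailCoeff]; ring
    rw [hc]
    exact h.chain hK ha

end ContFrac

section Transfer

variable {𝕜 : Type*} [Field 𝕜] {K : 𝕜} {φ : ℕ → 𝕜⟦X⟧}

/-- Product of the matrices of the Möbius maps `ψ ↦ X / (1 - K X ψ / ((2j+1)(2j+3)))`, `j < k`,
scaled to have polynomial entries. -/
def transferMatrix (K : 𝕜) : ℕ → Matrix (Fin 2) (Fin 2) 𝕜⟦X⟧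
  | 0 => 1
  | j + 1 => transferMatrix K j *
      !![0, C (tailCoeff j : 𝕜) * X; -(C K * X), C (tailCoeff j : 𝕜)]

lemma transferMatrix_succ_apply (j : ℕ) (i : Fin 2) :
    transferMatrix K (j + 1) i 0 = -(C K * X) * transferMatrix K j i 1 ∧
      transferMatrix K (j + 1) i 1 =
        C (tailCoeff j : 𝕜) * (X * transferMatrix K j i 0 + transferMatrix K j i 1) := by
  simp only [transferMatrix, map_natCast, Matrix.mul_apply, Matrix.of_apply, Matrix.cons_val',
    Matrix.cons_val_zero, Matrix.cons_val_fin_one, Fin.sum_univ_two, Matrix.cons_val_one]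
  constructor <;> ring

lemma det_transferMatrix (k : ℕ) :
    (transferMatrix K k).det = C ((tailCoeffProd k : 𝕜) * K ^ k) * X ^ (2 * k) := by
  induction k with
  | zero => simp [transferMatrix, tailCoeffProd]
  | succ k ih =>
    rw [transferMatrix, Matrix.det_mul, ih, Matrix.det_fin_two_of, tailCoeffProd_succ]
    simp only [map_mul, map_pow, Nat.cast_mul]
    ring

lemma coeff_transferMatrix_of_lt (k : ℕ) (i j : Fin 2) (m : ℕ) (hm : k < m) :
    coeff m (transferMatrix K k i j) = 0 := by
  induction k generalizing i j m with
  | zero =>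
    have hm₀ : m ≠ 0 := by omega
    fin_cases i <;> fin_cases j <;> simp [transferMatrix, coeff_one, hm₀]
  | succ k ih =>
    obtain ⟨h0, h1⟩ := transferMatrix_succ_apply (K := K) k i
    obtain ⟨m, rfl⟩ : ∃ m', m = m' + 1 := ⟨m - 1, by omega⟩
    obtain rfl | rfl : j = 0 ∨ j = 1 := by omega
    · simp [h0, mul_assoc, coeff_succ_X_mul, ih _ _ _ (by omega : k < m)]
    · rw [h1, coeff_C_mul, map_add, coeff_succ_X_mul, ih _ _ _ (by omega), ih _ _ _ (by omega),
        add_zero, mul_zero]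

lemma constantCoeff_transferMatrix (k : ℕ) :
    constantCoeff (transferMatrix K k 1 0) = 0 ∧
      constantCoeff (transferMatrix K k 1 1) = tailCoeffProd k := by
  induction k with
  | zero => simp [transferMatrix, tailCoeffProd]
  | succ k ih =>
    obtain ⟨h0, h1⟩ := transferMatrix_succ_apply (K := K) k 1
    simp [h0, h1, ih.2, tailCoeffProd_succ, mul_comm]

lemma IsContFracTails.mobius (hφ : IsContFracTails K φ) (k : ℕ) :
    φ 0 * (transferMatrix K k 1 0 * φ k + transferMatrix K k 1 1) =
      transferMatrix K k 0 0 * φ k + transferMatrix K k 0 1 := by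
  induction k with
  | zero => simp [transferMatrix]
  | succ k ih =>
    obtain ⟨h00, h01⟩ := transferMatrix_succ_apply (K := K) k 0
    obtain ⟨h10, h11⟩ := transferMatrix_succ_apply (K := K) k 1
    rw [h00, h01, h10, h11]
    linear_combination (C (tailCoeff k : 𝕜) - C K * X * φ (k + 1)) * ih
      + (transferMatrix K k 0 0 - φ 0 * transferMatrix K k 1 0) * (hφ k).2.2

/-- With `T_k = !![α, β; γ, δ]`, divide `(γ φ_k + δ)(δ F - β) = det T_k · φ_k` by the unit
`γ φ_k + δ`. -/
lemma IsContFracTails.exists_transferMatrix_mul_sub_eq [CharZero 𝕜] (hφ : IsContFracTails K φ)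
    (k : ℕ) : ∃ G : 𝕜⟦X⟧, constantCoeff G = K ^ k ∧
      transferMatrix K k 1 1 * φ 0 - transferMatrix K k 0 1 = X ^ (2 * k + 1) * G := by
  set T := transferMatrix K k
  set E := T 1 0 * φ k + T 1 1
  set S := shiftX 1 (φ k)
  have hS : X * S = φ k := by
    simpa using X_pow_mul_shiftX (k := 1) (φ := φ k) fun m hm => by
      rw [Nat.lt_one_iff.mp hm, coeff_zero_eq_constantCoeff_apply, (hφ k).1]
  have hP : (tailCoeffProd k : 𝕜) ≠ 0 := by exact_mod_cast (tailCoeffProd_pos k).ne'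
  have hE : constantCoeff E = tailCoeffProd k := by
    simp [E, T, (hφ k).1, (constantCoeff_transferMatrix k).2]
  have hEE : E * E⁻¹ = 1 := PowerSeries.mul_inv_cancel _ (hE ▸ hP)
  have hdet : T 0 0 * T 1 1 - T 0 1 * T 1 0 =
      C ((tailCoeffProd k : 𝕜) * K ^ k) * X ^ (2 * k) := by
    rw [← Matrix.det_fin_two, det_transferMatrix]
  refine ⟨C ((tailCoeffProd k : 𝕜) * K ^ k) * S * E⁻¹, ?_, ?_⟩
  · simp only [map_mul, map_natCast, map_pow, shiftX, constantCoeff_C, constantCoeff_mk, zero_add,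
      (hφ k).2.1, mul_one, constantCoeff_inv, hE, S]
    field_simp
  · refine mul_left_cancel₀ (fun h0 => hP (by simpa [h0] using hE.symm)) (?_ : E * _ = E * _)
    linear_combination T 1 1 * hφ.mobius k + φ k * hdet
      - C ((tailCoeffProd k : 𝕜) * K ^ k) * X ^ (2 * k) * hS
      - X ^ (2 * k + 1) * C ((tailCoeffProd k : 𝕜) * K ^ k) * S * hEE

lemma IsContFracTails.coeff_transferMatrix_mul [CharZero 𝕜] (hφ : IsContFracTails K φ)
    {k t : ℕ} (ht : t ≤ k) :
    coeff (k + t + 1) (transferMatrix K k 1 1 * φ 0) = if t = k then K ^ k else 0 := by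
  obtain ⟨G, hG, hfac⟩ := hφ.exists_transferMatrix_mul_sub_eq k
  rw [eq_add_of_sub_eq hfac, map_add, coeff_transferMatrix_of_lt k 0 1 _ (by omega), add_zero,
    coeff_X_pow_mul']
  rcases eq_or_lt_of_le ht with rfl | hlt
  · rw [if_pos (by omega), if_pos rfl, show t + t + 1 - (2 * t + 1) = 0 by omega,
      coeff_zero_eq_constantCoeff_apply, hG]
  · rw [if_neg (by omega), if_neg hlt.ne]

end Transfer

section Hankel

variable {𝕜 : Type*} [Field 𝕜] [CharZero 𝕜] {K : 𝕜} {φ : ℕ → 𝕜⟦X⟧}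

theorem IsContFracTails.prod_mul_det_hankel (hφ : IsContFracTails K φ) (n : ℕ) :
    (∏ k ∈ Finset.range n, (tailCoeffProd k : 𝕜)) *
      (Matrix.of fun i j : Fin n => coeff (i + j + 1) (φ 0)).det = ∏ k ∈ Finset.range n, K ^ k := by
  set L : Matrix (Fin n) (Fin n) 𝕜 := Matrix.of fun l u =>
    if (u : ℕ) ≤ l then coeff (l - u) (transferMatrix K l 1 1) else 0
  set A := Matrix.of fun i j : Fin n => coeff (i + j + 1) (φ 0)
  have hLA (l t : Fin n) : (L * A) l t = coeff (l + t + 1) (transferMatrix K l 1 1 * φ 0) := by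
    have hl : (Finset.range n).filter (· ≤ (l : ℕ)) = Finset.range (l + 1) := by
      ext u
      simp only [Finset.mem_filter, Finset.mem_range]
      omega
    rw [add_assoc, coeff_add_mul_eq_sum (coeff_transferMatrix_of_lt l 1 1), Matrix.mul_apply]
    refine (Fin.sum_univ_eq_sum_range (fun u => (if u ≤ (l : ℕ) then
      coeff (l - u) (transferMatrix K l 1 1) else 0) * coeff (u + t + 1) (φ 0)) n).trans ?_
    rw [← hl, Finset.sum_filter]
    refine Finset.sum_congr rfl fun u _ => ?_
    split_ifs <;> simp [add_assoc]
  have hL : L.IsLowerTriangular := fun l u hlu => if_neg (not_le.mpr hlu)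
  have hU : (L * A).IsUpperTriangular := fun l t htl => by
    change t < l at htl
    rw [hLA, hφ.coeff_transferMatrix_mul htl.le, if_neg (Fin.val_ne_of_ne htl.ne)]
  have h := Matrix.prod_diag_mul_det_of_isUpperTriangular_mul hL hU
  simp only [hLA, hφ.coeff_transferMatrix_mul le_rfl, if_true, L, Matrix.of_apply, le_rfl,
    Nat.sub_self, coeff_zero_eq_constantCoeff_apply, (constantCoeff_transferMatrix _).2] at h
  rwa [Fin.prod_univ_eq_prod_range (fun k => (tailCoeffProd k : 𝕜)),
    Fin.prod_univ_eq_prod_range (fun k => K ^ k)] at h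

end Hankel

section Factorials

open Nat Finset

lemma tailCoeffProd_mul_four_pow (k : ℕ) :
    tailCoeffProd k * 4 ^ k * k ! ^ 2 = (2 * k)! * (2 * k + 1)! := by
  induction k with
  | zero => simp [tailCoeffProd]
  | succ k ih =>
    have e₁ : (2 * (k + 1))! = (2 * k + 2) * (2 * k + 1) * (2 * k)! := by
      rw [show 2 * (k + 1) = 2 * k + 1 + 1 by ring, factorial_succ, factorial_succ]; ring
    have e₂ : (2 * (k + 1) + 1)! = (2 * k + 3) * (2 * k + 2) * (2 * k + 1)! := by
      rw [show 2 * (k + 1) + 1 = 2 * k + 1 + 1 + 1 by ring, factorial_succ, factorial_succ]; ring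
    calc tailCoeffProd (k + 1) * 4 ^ (k + 1) * (k + 1)! ^ 2
        = tailCoeffProd k * 4 ^ k * k ! ^ 2 * (tailCoeff k * 4 * (k + 1) ^ 2) := by
          rw [tailCoeffProd_succ, factorial_succ]; ring
      _ = (2 * (k + 1))! * (2 * (k + 1) + 1)! := by
          rw [ih, e₁, e₂, tailCoeff]; ring

lemma prod_factorial_add_succ_mul (n : ℕ) :
    (∏ j ∈ range (n + 1), (n + 1 + j)!) * n ! =
      (∏ j ∈ range n, (n + j)!) * ((2 * n)! * (2 * n + 1)!) := by
  have h := (prod_range_succ (fun j => (n + j)!) n).symm.trans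
    (prod_range_succ' (fun j => (n + j)!) n)
  simp only [add_zero, ← add_assoc, add_right_comm n _ 1] at h
  rw [prod_range_succ, mul_right_comm, ← h, two_mul, show n + n + 1 = n + 1 + n by ring]
  ring

lemma prod_factorial_add (n : ℕ) :
    ∏ j ∈ range n, (n + j)! = 2 ^ (n * (n - 1)) * (∏ k ∈ range n, tailCoeffProd k) *
      ∏ j ∈ range n, j ! := by
  induction n with
  | zero => simp
  | succ n ih =>
    refine Nat.eq_of_mul_eq_mul_right (factorial_pos n) ?_
    have hexp : (n + 1) * (n + 1 - 1) = n * (n - 1) + 2 * n := by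
      cases n with
      | zero => rfl
      | succ m => simp only [Nat.add_sub_cancel]; ring
    rw [prod_factorial_add_succ_mul, ih, ← tailCoeffProd_mul_four_pow, prod_range_succ,
      prod_range_succ, hexp, pow_add, show (4 : ℕ) ^ n = 2 ^ (2 * n) by rw [pow_mul]; norm_num]
    ring

lemma prod_Icc_factorial_div {𝕜 : Type*} [Field 𝕜] (n : ℕ) :
    ∏ k ∈ Icc 1 n, ((n - k)! : 𝕜) / (2 * n - k)! = ∏ j ∈ range n, (j ! : 𝕜) / (n + j)! := by
  refine prod_nbij' (fun k => n - k) (fun j => n - j) ?_ ?_ ?_ ?_ fun k hk => ?_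
  iterate 4 (intro a ha; simp only [mem_Icc, mem_range] at ha ⊢; omega)
  rw [show 2 * n - k = n + (n - k) by simp only [mem_Icc] at hk; omega]

lemma two_pow_mul_prod_factorial_div_mul_prod_tailCoeffProd {𝕜 : Type*} [Field 𝕜] [CharZero 𝕜]
    (n : ℕ) :
    (2 : 𝕜) ^ (n * (n - 1)) * (∏ k ∈ Icc 1 n, ((n - k)! : 𝕜) / (2 * n - k)!) *
      ∏ k ∈ range n, (tailCoeffProd k : 𝕜) = 1 := by
  have h : (∏ j ∈ range n, (n + j)! : 𝕜) = 2 ^ (n * (n - 1)) *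
      (∏ k ∈ range n, (tailCoeffProd k : 𝕜)) * ∏ j ∈ range n, (j ! : 𝕜) := by
    exact_mod_cast prod_factorial_add n
  have hQ : (∏ j ∈ range n, (n + j)! : 𝕜) ≠ 0 :=
    prod_ne_zero_iff.mpr fun j _ => by exact_mod_cast (n + j).factorial_ne_zero
  rw [prod_Icc_factorial_div, prod_div_distrib, div_eq_mul_inv]
  field_simp
  rw [h]
  ring

end Factorials

end

theorem stmt15_general (K x : ℝ) (n : ℕ) (f₁ f₂ : ℝ → ℝ)
    (hf : IsFundPair (fun _ => K) x f₁ f₂) :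
    (Matrix.of fun i j : Fin n =>
      iteratedDeriv (i.1 + j.1 + 1) (fun t => f₂ t / f₁ t) x /
        (Nat.factorial (i.1 + j.1 + 1) : ℝ)).det =
      2 ^ (n * (n - 1)) * K ^ (n * (n - 1) / 2) *
        ∏ k ∈ Finset.Icc 1 n, ((n - k).factorial : ℝ) / ((2 * n - k).factorial : ℝ) := by
  obtain ⟨φ, hφ₀, hφ⟩ := hf.isRiccatiTail_taylorSeries.exists_isContFracTails
  have hdet := hφ.prod_mul_det_hankel n
  rw [hφ₀, Finset.prod_pow_eq_pow_sum, Finset.sum_range_id] at hdet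
  have hP : ∏ k ∈ Finset.range n, (tailCoeffProd k : ℝ) ≠ 0 :=
    Finset.prod_ne_zero_iff.mpr fun k _ => by exact_mod_cast (tailCoeffProd_pos k).ne'
  have hH : (Matrix.of fun i j : Fin n =>
      iteratedDeriv (i.1 + j.1 + 1) (fun t => f₂ t / f₁ t) x /
        (Nat.factorial (i.1 + j.1 + 1) : ℝ)) =
      Matrix.of fun i j : Fin n => coeff (i + j + 1) (taylorSeries (fun t => f₂ t / f₁ t) x) := by
    ext i j
    simp [taylorSeries]
  rw [hH]
  refine mul_left_cancel₀ hP ?_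
  linear_combination hdet - K ^ (n * (n - 1) / 2) *
    two_pow_mul_prod_factorial_div_mul_prod_tailCoeffProd (𝕜 := ℝ) n

/-- For the constant function `θ ≡ K`, the `n×n` Hankel determinant of
the Schwarzians equals `2^{n(n-1)}·K^{n(n-1)/2}·∏_{k=1}^{n}(n-k)!/(2n-k)!`. -/
theorem stmt15 (K x : ℝ) (n : ℕ) (hn : 1 ≤ n) (f₁ f₂ : ℝ → ℝ)
    (hf : IsFundPair (fun _ => K) x f₁ f₂) :
    (Matrix.of fun i j : Fin n =>
      iteratedDeriv (i.1 + j.1 + 1) (fun t => f₂ t / f₁ t) x /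
        (Nat.factorial (i.1 + j.1 + 1) : ℝ)).det =
      2 ^ (n * (n - 1)) * K ^ (n * (n - 1) / 2) *
        ∏ k ∈ Finset.Icc 1 n, ((n - k).factorial : ℝ) / ((2 * n - k).factorial : ℝ) :=
  stmt15_general K x n f₁ f₂ hf
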